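/- Let U be an N×N real matrix (N ≥ 2) such that for all i < j, U_{ii} > U_{ji} > U_{jj} > U_{ij}. Then there exists ᾱ ∈ (0,1) such that for every α with ᾱ < α ≤ 1, the profile (0,0) is the unique pure Nash equilibrium of the two-player game in which agent 1's utility at (i,j) is (1−α)U_{ij} + αU_{ji} and agent 2's payoff at (i,j) is U_{ji}. In particular, for such α every diagonal profile (j,j) with j ≠ 0 is destroyed because agent 1 strictly gains by deviating to strategy 0. -/

import Mathlib

/-!
Agent 2's payoff `U j i` is uniquely maximised at `j = i`, so every equilibrium is diagonal.
At a diagonal profile `(j, j)` with `j ≠ 0`, agent 1 gains by switching to `0` as soon as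
`α` exceeds `(U j j - U 0 j) / (U j 0 - U 0 j)`, which lies in `(0, 1)` because
`U j 0 > U j j > U 0 j`; taking `ᾱ` above these finitely many thresholds leaves `(0, 0)`,
where both `U i 0` and `U 0 i` fall short of `U 0 0`.
-/

namespace StagHunt

variable {ι : Type*} {U : ι → ι → ℝ} {α : ℝ}

/-- The entries of `U^α = (1 - α) U + α Uᵀ`. -/
def prosocialUtility (U : ι → ι → ℝ) (α : ℝ) (i j : ι) : ℝ :=
  (1 - α) * U i j + α * U j i

def IsNash (U : ι → ι → ℝ) (α : ℝ) (i j : ι) : Prop :=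
  (∀ i', prosocialUtility U α i' j ≤ prosocialUtility U α i j) ∧ ∀ j', U j' i ≤ U j i

@[simp]
theorem prosocialUtility_diag (i : ι) : prosocialUtility U α i i = U i i := by
  unfold prosocialUtility
  ring

noncomputable def deviationThreshold (U : ι → ι → ℝ) (z j : ι) : ℝ :=
  (U j j - U z j) / (U j z - U z j)

theorem exists_pos_lt_one_forall_le {κ : Type*} [Finite κ] (f : κ → ℝ) (hf : ∀ k, f k < 1) :
    ∃ a, 0 < a ∧ a < 1 ∧ ∀ k, f k ≤ a := by
  cases isEmpty_or_nonempty κ with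
  | inl _ => exact ⟨1 / 2, by norm_num, by norm_num, isEmptyElim⟩
  | inr _ =>
    obtain ⟨k₀, hk₀⟩ := Finite.exists_max f
    exact ⟨max (1 / 2) (f k₀), by positivity, max_lt (by norm_num) (hf k₀),
      fun k => (hk₀ k).trans (le_max_right _ _)⟩

section LinearOrder

variable [LinearOrder ι]
  (hSH : ∀ i j : ι, i < j → U i i > U j i ∧ U j i > U j j ∧ U j j > U i j)
include hSH

theorem lt_diag_of_ne {i j : ι} (h : j ≠ i) : U j i < U i i := by
  rcases h.lt_or_gt with h | h
  · exact (hSH j i h).2.2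
  · exact (hSH i j h).1

theorem prosocialUtility_lt_diag {z i : ι} (h : z < i) (hα : 0 ≤ α) :
    prosocialUtility U α i z < U z z := by
  obtain ⟨h₁, h₂, h₃⟩ := hSH z i h
  have h₄ : U z i < U z z := by linarith
  unfold prosocialUtility
  nlinarith

theorem deviationThreshold_lt_one {z j : ι} (h : z < j) : deviationThreshold U z j < 1 := by
  obtain ⟨-, h₂, h₃⟩ := hSH z j h
  exact (div_lt_one (by linarith)).2 (by linarith)

theorem diag_lt_prosocialUtility {z j : ι} (h : z < j) (hα : deviationThreshold U z j < α) :
    U j j < prosocialUtility U α z j := by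
  obtain ⟨-, h₂, h₃⟩ := hSH z j h
  rw [deviationThreshold, div_lt_iff₀ (by linarith)] at hα
  unfold prosocialUtility
  linarith

theorem isNash_iff {z : ι} (hz : ∀ i, z ≤ i) (hα : 0 ≤ α)
    (hdev : ∀ j, j ≠ z → U j j < prosocialUtility U α z j) {i j : ι} :
    IsNash U α i j ↔ i = z ∧ j = z := by
  constructor
  · rintro ⟨hagent₁, hagent₂⟩
    obtain rfl : j = i := by
      by_contra hji
      exact (lt_diag_of_ne hSH hji).not_ge (hagent₂ i)
    obtain rfl : j = z := by
      by_contra hjz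
      exact (hdev j hjz).not_ge (by simpa using hagent₁ z)
    exact ⟨rfl, rfl⟩
  · rintro ⟨hi, hj⟩
    subst i j
    refine ⟨fun i' => ?_, fun j' => ?_⟩
    · rcases eq_or_ne i' z with rfl | hi'
      · exact le_rfl
      · rw [prosocialUtility_diag]
        exact (prosocialUtility_lt_diag hSH ((hz i').lt_of_ne hi'.symm) hα).le
    · rcases eq_or_ne j' z with rfl | hj'
      · exact le_rfl
      · exact (lt_diag_of_ne hSH hj').le

end LinearOrder

end StagHunt

open StagHunt in
/-- Let `U` be an `N×N` real matrix (`N ≥ 2`) with, for all `i < j`,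
`U i i > U j i > U j j > U i j`. Then there exists `ᾱ ∈ (0,1)` such that for every
`α` with `ᾱ < α ≤ 1` the profile `(0,0)` is the unique pure Nash equilibrium of the
game in which agent 1's utility at `(i,j)` is `(1−α)·U i j + α·U j i` and agent 2's
payoff at `(i,j)` is `U j i`: a profile `(i,j)` satisfies both agents' Nash conditions
iff `i = 0 ∧ j = 0`. In particular every diagonal profile `(j,j)` with `j ≠ 0` is
destroyed because agent 1 strictly gains by deviating to strategy `0`. -/
theorem stag_hunt_matrix_unique_nash_for_high_prosociality
    (N : ℕ) (hN : 2 ≤ N) (U : Fin N → Fin N → ℝ)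
    (hSH : ∀ i j : Fin N, i < j → U i i > U j i ∧ U j i > U j j ∧ U j j > U i j) :
    ∃ abar : ℝ, 0 < abar ∧ abar < 1 ∧ ∀ α : ℝ, abar < α → α ≤ 1 →
      (∀ i j : Fin N,
        ((∀ i' : Fin N, (1 - α) * U i' j + α * U j i' ≤ (1 - α) * U i j + α * U j i)
          ∧ (∀ j' : Fin N, U j' i ≤ U j i))
        ↔ (i = ⟨0, by omega⟩ ∧ j = ⟨0, by omega⟩))
      ∧ (∀ j : Fin N, j ≠ ⟨0, by omega⟩ →
          (1 - α) * U ⟨0, by omega⟩ j + α * U j ⟨0, by omega⟩ > U j j) := by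
  set z : Fin N := ⟨0, by omega⟩
  have hz : ∀ i, z ≤ i := fun i => Fin.le_def.2 (Nat.zero_le _)
  obtain ⟨abar, habar₀, habar₁, habove⟩ :=
    exists_pos_lt_one_forall_le (fun j : {j // j ≠ z} => deviationThreshold U z j)
      fun j => deviationThreshold_lt_one hSH ((hz j).lt_of_ne j.2.symm)
  refine ⟨abar, habar₀, habar₁, fun α hα _ => ?_⟩
  have hdev : ∀ j, j ≠ z → U j j < prosocialUtility U α z j := fun j hj =>
    diag_lt_prosocialUtility hSH ((hz j).lt_of_ne hj.symm) ((habove ⟨j, hj⟩).trans_lt hα)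
  exact ⟨fun i j => isNash_iff hSH hz (habar₀.trans hα).le hdev, hdev⟩
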